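/- Suppose A N = N, let α ∈ ℝ, and let S : T → T be a real-linear map on T := {Y ∈ V : g(Y,N) = 0} that is g-symmetric and satisfies Sξ = αξ (Hopf shape operator). Define R̄_N, R_ξ : T → T by R̄_N Y := Y + 2η(Y)ξ + A Y and R_ξ Y := Y - 2η(Y)ξ - A Y + α·S Y - α²η(Y)ξ, where η(Y) := g(Y,ξ). Then for every Y ∈ T, (R̄_N∘R_ξ - R_ξ∘R̄_N)(Y) = α·(A(S Y) - S(A Y)). In particular, R̄_N and R_ξ commute if and only if α·(A S - S A) = 0 on T. -/

import Mathlib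

/-!
Put `η := g(·, ξ)`. Since `A` is conjugate-linear and fixes `N`, it reverses `ξ = -iN`, and
since it is an isometry of `g` it also reverses `η`: `η(AY) = -η(Y)`. Symmetry of `S` and
`Sξ = αξ` give `η(SY) = α η(Y)`. With `g(ξ,ξ) = 1`, all multiples of `ξ` cancel in both
compositions, leaving `R̄_N (R_ξ Y) = α (SY + ASY)` and `R_ξ (R̄_N Y) = α (SY + SAY)`.
-/

noncomputable section

variable {V : Type*}

/-- The real inner product `g(x,y) = Re⟨x,y⟩` induced by the Hermitian inner product. -/
def g [NormedAddCommGroup V] [InnerProductSpace ℂ V] (x y : V) : ℝ := (inner ℂ x y : ℂ).re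

/-- The normal Jacobi operator of an 𝔄-principal hypersurface:
`R̄_N Y = Y + 2η(Y)ξ + AY`. -/
def RNop [NormedAddCommGroup V] [InnerProductSpace ℂ V]
    (A : V →ₗ[ℝ] V) (ξ Y : V) : V :=
  Y + (2 * g Y ξ) • ξ + A Y

/-- The structure Jacobi operator of an 𝔄-principal Hopf hypersurface:
`R_ξ Y = Y - 2η(Y)ξ - AY + α·SY - α²η(Y)ξ`. -/
def Rxiop [NormedAddCommGroup V] [InnerProductSpace ℂ V]
    (A S : V →ₗ[ℝ] V) (α : ℝ) (ξ Y : V) : V :=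
  Y - (2 * g Y ξ) • ξ - A Y + α • S Y - (α ^ 2 * g Y ξ) • ξ

section

variable [NormedAddCommGroup V] [InnerProductSpace ℂ V]

lemma g_comm (x y : V) : g x y = g y x :=
  inner_re_symm (𝕜 := ℂ) x y

lemma g_add_left (x y z : V) : g (x + y) z = g x z + g y z := by
  simp [g]

lemma g_sub_left (x y z : V) : g (x - y) z = g x z - g y z := by
  simp [g]

lemma g_neg_left (x y : V) : g (-x) y = -g x y := by
  simp [g]

lemma g_smul_left (r : ℝ) (x y : V) : g (r • x) y = r * g x y := by
  rw [g, RCLike.real_smul_eq_coe_smul (K := ℂ), inner_smul_left]; simp [g]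

lemma g_smul_right (r : ℝ) (x y : V) : g x (r • y) = r * g x y := by
  rw [g, RCLike.real_smul_eq_coe_smul (K := ℂ), inner_smul_right]; simp [g]

lemma g_self (x : V) : g x x = ‖x‖ ^ 2 :=
  inner_self_eq_norm_sq (𝕜 := ℂ) x

lemma g_I_smul_self (x : V) : g (Complex.I • x) x = 0 := by
  rw [g_comm]
  exact real_inner_I_smul_self ℂ x

lemma g_self_neg_I_smul_of_norm_eq_one {N : V} (hN : ‖N‖ = 1) :
    g (-(Complex.I • N)) (-(Complex.I • N)) = 1 := by
  rw [g_self, norm_neg, norm_smul, Complex.norm_I, hN, one_mul, one_pow]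

lemma g_neg_I_smul_self (N : V) : g (-(Complex.I • N)) N = 0 := by
  rw [g_neg_left, g_I_smul_self, neg_zero]

lemma apply_neg_I_smul_of_apply_eq {A : V →ₗ[ℝ] V}
    (hA_antiJ : ∀ x, A (Complex.I • x) = -(Complex.I • A x)) {N : V} (hAN : A N = N) :
    A (-(Complex.I • N)) = Complex.I • N := by
  rw [map_neg, hA_antiJ, hAN, neg_neg]

lemma g_apply_of_apply_eq_neg {A : V →ₗ[ℝ] V}
    (hA_herm : ∀ x y, (inner ℂ (A x) (A y) : ℂ) = inner ℂ y x) {ξ : V} (hAξ : A ξ = -ξ)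
    (x : V) :
    g (A x) ξ = -g x ξ := by
  have h : g (A x) (A ξ) = g ξ x := congrArg Complex.re (hA_herm x ξ)
  rwa [hAξ, g_comm ξ, g_comm, g_neg_left, g_comm, neg_eq_iff_eq_neg] at h

variable {A S : V →ₗ[ℝ] V} {α : ℝ} {ξ : V}

lemma RNop_Rxiop (hA_invol : ∀ x, A (A x) = x) (hAξ : A ξ = -ξ) (hξξ : g ξ ξ = 1)
    (hgA : ∀ x, g (A x) ξ = -g x ξ) {Y : V} (hSY : g (S Y) ξ = α * g Y ξ) :
    RNop A ξ (Rxiop A S α ξ Y) = α • (S Y + A (S Y)) := by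
  simp only [RNop, Rxiop, map_add, map_sub, map_smul, hAξ, hA_invol,
    g_sub_left, g_add_left, g_smul_left, hξξ, hgA, hSY]
  module

lemma Rxiop_RNop (hA_invol : ∀ x, A (A x) = x) (hAξ : A ξ = -ξ) (hξξ : g ξ ξ = 1)
    (hgA : ∀ x, g (A x) ξ = -g x ξ) (hSξ : S ξ = α • ξ) (Y : V) :
    Rxiop A S α ξ (RNop A ξ Y) = α • (S Y + S (A Y)) := by
  simp only [Rxiop, RNop, map_add, map_smul, hAξ, hSξ, hA_invol,
    g_add_left, g_smul_left, hξξ, hgA]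
  module

end

theorem stmt_8_general [NormedAddCommGroup V] [InnerProductSpace ℂ V]
    (A : V →ₗ[ℝ] V)
    (hA_invol : ∀ x, A (A x) = x)
    (hA_antiJ : ∀ x, A (Complex.I • x) = -(Complex.I • A x))
    (hA_herm : ∀ x y, (inner ℂ (A x) (A y) : ℂ) = inner ℂ y x)
    (N : V) (hN : ‖N‖ = 1)
    (ξ : V) (hξ : ξ = -(Complex.I • N))
    (hAN : A N = N)
    (α : ℝ) (S : V →ₗ[ℝ] V)
    (hS_sym : ∀ X Y : V, g X N = 0 → g Y N = 0 → g (S X) Y = g X (S Y))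
    (hSξ : S ξ = α • ξ) :
    (∀ Y : V, g Y N = 0 →
      RNop A ξ (Rxiop A S α ξ Y) - Rxiop A S α ξ (RNop A ξ Y)
        = α • (A (S Y) - S (A Y))) ∧
    ((∀ Y : V, g Y N = 0 →
        RNop A ξ (Rxiop A S α ξ Y) = Rxiop A S α ξ (RNop A ξ Y)) ↔
      (∀ Y : V, g Y N = 0 → α • (A (S Y) - S (A Y)) = 0)) := by
  have hAξ : A ξ = -ξ := by rw [hξ, apply_neg_I_smul_of_apply_eq hA_antiJ hAN, neg_neg]
  have hξξ : g ξ ξ = 1 := hξ ▸ g_self_neg_I_smul_of_norm_eq_one hN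
  have hξN : g ξ N = 0 := hξ ▸ g_neg_I_smul_self N
  have hgA := g_apply_of_apply_eq_neg hA_herm hAξ
  have commutator : ∀ Y : V, g Y N = 0 →
      RNop A ξ (Rxiop A S α ξ Y) - Rxiop A S α ξ (RNop A ξ Y)
        = α • (A (S Y) - S (A Y)) := by
    intro Y hY
    have hSY : g (S Y) ξ = α * g Y ξ := by rw [hS_sym Y ξ hY hξN, hSξ, g_smul_right]
    rw [RNop_Rxiop hA_invol hAξ hξξ hgA hSY, Rxiop_RNop hA_invol hAξ hξξ hgA hSξ]
    module
  refine ⟨commutator, forall₂_congr fun Y hY => ?_⟩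
  rw [← commutator Y hY, sub_eq_zero]

/-- If `AN = N` and `S` is a `g`-symmetric shape operator on `T = {Y : g(Y,N) = 0}` with
`Sξ = αξ`, then `(R̄_N∘R_ξ - R_ξ∘R̄_N)(Y) = α·(A(SY) - S(AY))` for all `Y ∈ T`; in
particular `R̄_N` and `R_ξ` commute on `T` iff `α·(AS - SA) = 0` on `T`. -/
theorem stmt_8 [NormedAddCommGroup V] [InnerProductSpace ℂ V]
    (A : V →ₗ[ℝ] V)
    (hA_invol : ∀ x, A (A x) = x)
    (hA_antiJ : ∀ x, A (Complex.I • x) = -(Complex.I • A x))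
    (hA_herm : ∀ x y, (inner ℂ (A x) (A y) : ℂ) = inner ℂ y x)
    (N : V) (hN : ‖N‖ = 1)
    (ξ : V) (hξ : ξ = -(Complex.I • N))
    (hAN : A N = N)
    (α : ℝ) (S : V →ₗ[ℝ] V)
    (hS_tan : ∀ Y : V, g Y N = 0 → g (S Y) N = 0)
    (hS_sym : ∀ X Y : V, g X N = 0 → g Y N = 0 → g (S X) Y = g X (S Y))
    (hSξ : S ξ = α • ξ) :
    (∀ Y : V, g Y N = 0 →
      RNop A ξ (Rxiop A S α ξ Y) - Rxiop A S α ξ (RNop A ξ Y)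
        = α • (A (S Y) - S (A Y))) ∧
    ((∀ Y : V, g Y N = 0 →
        RNop A ξ (Rxiop A S α ξ Y) = Rxiop A S α ξ (RNop A ξ Y)) ↔
      (∀ Y : V, g Y N = 0 → α • (A (S Y) - S (A Y)) = 0)) :=
  stmt_8_general A hA_invol hA_antiJ hA_herm N hN ξ hξ hAN α S hS_sym hSξ
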